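/- arXiv:1411.3714 — 3 statements merged into one kernel-verified Lean document; each statement's English description precedes it below -/
import Mathlib

section
/- Let a = 2(n-1), n ≥ 2, b ∈ (0,1), D > 0, and v_2(ρ) = D ρ^{-4}, where L̂_ρ[v] = (a ρ v'/2 + a v)/ρ^2 + (1/2) ρ v'. Then 2b·v_2(ρ) − L̂_ρ[v_2](ρ) = D( a ρ^{-6} + 2(b+1) ρ^{-4} ), and in particular 2b v_2(ρ) − L̂_ρ[v_2](ρ) ≥ D ρ^{-6} for all ρ > 0. -/
open Real

theorem stmt3 (n : ℕ) (hn : 2 ≤ n) (a b D : ℝ) (ha : a = 2 * ((n : ℝ) - 1))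
    (hb : 0 < b) (hb1 : b < 1) (hD : 0 < D)
    (v₂ : ℝ → ℝ) (hv₂ : ∀ ρ : ℝ, 0 < ρ → v₂ ρ = D * ρ ^ (-4 : ℝ)) :
    ∀ ρ : ℝ, 0 < ρ →
      2*b*v₂ ρ - ((a*ρ*deriv v₂ ρ/2 + a*v₂ ρ)/ρ^2 + (1/2)*ρ*deriv v₂ ρ)
        = D * (a * ρ ^ (-6 : ℝ) + 2*(b+1) * ρ ^ (-4 : ℝ))
      ∧ D * ρ ^ (-6 : ℝ)
        ≤ 2*b*v₂ ρ - ((a*ρ*deriv v₂ ρ/2 + a*v₂ ρ)/ρ^2 + (1/2)*ρ*deriv v₂ ρ) := by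
  intro ρ hρ
  have hρ0 : ρ ≠ 0 := ne_of_gt hρ
  -- deriv of v₂ at ρ
  have heq : v₂ =ᶠ[nhds ρ] fun x => D * x ^ (-4 : ℤ) := by
    filter_upwards [IsOpen.mem_nhds isOpen_Ioi hρ] with x hx
    rw [hv₂ x hx, ← Real.rpow_intCast x (-4)]
    norm_num
  have hd : deriv v₂ ρ = D * ((-4 : ℤ) * ρ ^ (-5 : ℤ)) := by
    rw [Filter.EventuallyEq.deriv_eq heq]
    have : HasDerivAt (fun x : ℝ => D * x ^ (-4 : ℤ)) (D * ((-4 : ℤ) * ρ ^ (-4 - 1 : ℤ))) ρ :=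
      ((hasDerivAt_zpow (-4) ρ (Or.inl hρ0)).const_mul D)
    simpa using this.deriv
  have hd' : deriv v₂ ρ = -4 * D / ρ ^ (5 : ℕ) := by
    rw [hd, show ((-5) : ℤ) = -((5 : ℕ) : ℤ) by norm_num, zpow_neg, zpow_natCast]
    push_cast
    ring
  have hv : v₂ ρ = D / ρ ^ (4 : ℕ) := by
    rw [hv₂ ρ hρ, show ((-4) : ℝ) = -((4 : ℕ) : ℝ) by norm_num,
      Real.rpow_neg hρ.le, Real.rpow_natCast]
    ring
  have h4 : (ρ : ℝ) ^ (-4 : ℝ) = (ρ ^ (4 : ℕ))⁻¹ := by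
    rw [show ((-4) : ℝ) = -((4 : ℕ) : ℝ) by norm_num, Real.rpow_neg hρ.le, Real.rpow_natCast]
  have h6 : (ρ : ℝ) ^ (-6 : ℝ) = (ρ ^ (6 : ℕ))⁻¹ := by
    rw [show ((-6) : ℝ) = -((6 : ℕ) : ℝ) by norm_num, Real.rpow_neg hρ.le, Real.rpow_natCast]
  have key : 2*b*v₂ ρ - ((a*ρ*deriv v₂ ρ/2 + a*v₂ ρ)/ρ^2 + (1/2)*ρ*deriv v₂ ρ)
      = D * (a * ρ ^ (-6 : ℝ) + 2*(b+1) * ρ ^ (-4 : ℝ)) := by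
    rw [hd', hv, h4, h6]
    field_simp
    ring
  refine ⟨key, ?_⟩
  rw [key]
  have ha1 : (1 : ℝ) ≤ a := by
    rw [ha]
    have : (2 : ℝ) ≤ (n : ℝ) := by exact_mod_cast hn
    nlinarith
  have hp6 : (0 : ℝ) < ρ ^ (-6 : ℝ) := Real.rpow_pos_of_pos hρ _
  have hp4 : (0 : ℝ) ≤ ρ ^ (-4 : ℝ) := (Real.rpow_pos_of_pos hρ _).le
  nlinarith [mul_nonneg (mul_nonneg hD.le (by linarith : (0:ℝ) ≤ 2*(b+1))) hp4,
    mul_nonneg (mul_nonneg hD.le (by linarith : (0:ℝ) ≤ a-1)) hp6.le]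
end

section
/- Let a = 2(n-1), n ≥ 2, b ∈ (0,1), ε > 0, and define H(ρ) = (1 + (1+ε)(1+b) a ρ^{-2}) / (1 + a ρ^{-2})^{1+b} for ρ > 0. Then H(ρ) → 1 as ρ → ∞, and H is strictly decreasing on the interval ρ > √(a b (1+ε)/ε); in particular H(ρ) > 1 for all ρ > √(a b (1+ε)/ε). -/
/-!
Write `H ρ = G (a ρ⁻²)` with `G s = (1 + (1+ε)(1+b) s) / (1+s)^(1+b)`. Since `G 0 = 1` and
`a ρ⁻² → 0`, `H → 1`. The logarithmic derivative of `G` is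
`(1+b) (ε - b(1+ε) s) / ((1 + (1+ε)(1+b) s)(1+s))`, positive for `0 ≤ s < ε / (b(1+ε))`, which is
exactly the range of `a ρ⁻²` for `ρ > √(ab(1+ε)/ε)`; so `H` decreases there, towards its limit `1`.
-/

open Real Filter Set Topology

lemma StrictAntiOn.lt_of_tendsto_atTop {f : ℝ → ℝ} {c l : ℝ} (hf : StrictAntiOn f (Ioi c))
    (hlim : Tendsto f atTop (𝓝 l)) {x : ℝ} (hx : c < x) : l < f x := by
  have hx1 : c < x + 1 := by linarith
  have hle : l ≤ f (x + 1) :=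
    le_of_tendsto hlim <| by
      filter_upwards [eventually_gt_atTop (x + 1)] with y hy
      exact (hf hx1 (hx1.trans hy) hy).le
  exact hle.trans_lt (hf hx hx1 (lt_add_one x))

namespace BarrierRatio

variable {b ε : ℝ}

noncomputable def profile (b ε s : ℝ) : ℝ := (1 + (1 + ε) * (1 + b) * s) / (1 + s) ^ (1 + b)

noncomputable def logProfile (b ε s : ℝ) : ℝ :=
  log (1 + (1 + ε) * (1 + b) * s) - (1 + b) * log (1 + s)

lemma profile_zero : profile b ε 0 = 1 := by simp [profile]

lemma continuousAt_profile_zero : ContinuousAt (profile b ε) 0 := by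
  unfold profile
  apply ContinuousAt.div (by fun_prop)
  · exact (continuousAt_const.add continuousAt_id).rpow_const (Or.inl (by norm_num))
  · norm_num

lemma one_add_mul_pos (hb : 0 < b) (hε : 0 < ε) {s : ℝ} (hs : 0 ≤ s) :
    0 < 1 + (1 + ε) * (1 + b) * s := by
  have : 0 ≤ (1 + ε) * (1 + b) * s := by positivity
  linarith

lemma profile_eq_exp_logProfile (hb : 0 < b) (hε : 0 < ε) {s : ℝ} (hs : 0 ≤ s) :
    profile b ε s = exp (logProfile b ε s) := by
  rw [profile, logProfile, exp_sub, exp_log (one_add_mul_pos hb hε hs),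
    rpow_def_of_pos (by linarith), mul_comm (log (1 + s))]

lemma hasDerivAt_logProfile (hb : 0 < b) (hε : 0 < ε) {s : ℝ} (hs : 0 ≤ s) :
    HasDerivAt (logProfile b ε)
      ((1 + ε) * (1 + b) / (1 + (1 + ε) * (1 + b) * s) - (1 + b) * (1 / (1 + s))) s := by
  have hlin : HasDerivAt (fun s => 1 + (1 + ε) * (1 + b) * s) ((1 + ε) * (1 + b)) s := by
    simpa using ((hasDerivAt_id s).const_mul ((1 + ε) * (1 + b))).const_add 1
  have hshift : HasDerivAt (fun s => 1 + s) 1 s := by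
    simpa using (hasDerivAt_id s).const_add 1
  exact (hlin.log (one_add_mul_pos hb hε hs).ne').sub
    ((hshift.log (by linarith)).const_mul (1 + b))

lemma strictMonoOn_logProfile (hb : 0 < b) (hε : 0 < ε) :
    StrictMonoOn (logProfile b ε) (Icc 0 (ε / (b * (1 + ε)))) := by
  apply strictMonoOn_of_deriv_pos (convex_Icc _ _)
  · exact fun s hs => (hasDerivAt_logProfile hb hε hs.1).continuousAt.continuousWithinAt
  · intro s hs
    rw [interior_Icc] at hs
    rw [(hasDerivAt_logProfile hb hε hs.1.le).deriv, sub_pos, mul_one_div,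
      div_lt_div_iff₀ (by linarith [hs.1]) (one_add_mul_pos hb hε hs.1.le)]
    have hsmall : s * (b * (1 + ε)) < ε := (lt_div_iff₀ (by positivity)).1 hs.2
    -- the difference of the two sides is `(1+b) (ε - b(1+ε) s)`
    nlinarith [hs.1]

lemma strictMonoOn_profile (hb : 0 < b) (hε : 0 < ε) :
    StrictMonoOn (profile b ε) (Icc 0 (ε / (b * (1 + ε)))) := by
  intro x hx y hy hxy
  rw [profile_eq_exp_logProfile hb hε hx.1, profile_eq_exp_logProfile hb hε hy.1]
  exact exp_lt_exp.2 (strictMonoOn_logProfile hb hε hx hy hxy)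

end BarrierRatio

lemma mul_rpow_neg_two_lt_of_sqrt_div_lt {a t ρ : ℝ} (ht : 0 < t) (hρ : √(a / t) < ρ) :
    a * ρ ^ (-2 : ℝ) < t := by
  have hρ0 : 0 < ρ := (sqrt_nonneg _).trans_lt hρ
  have hsq : a / t < ρ ^ 2 := (sqrt_lt' hρ0).1 hρ
  rw [rpow_neg hρ0.le, rpow_two, ← div_eq_mul_inv, div_lt_iff₀ (by positivity)]
  rw [div_lt_iff₀ ht] at hsq
  linarith

open BarrierRatio in
theorem stmt5_general (n : ℕ) (hn : 2 ≤ n) (a b ε : ℝ) (ha : a = 2 * ((n : ℝ) - 1))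
    (hb : 0 < b) (hε : 0 < ε)
    (H : ℝ → ℝ)
    (hH : ∀ ρ : ℝ, 0 < ρ →
      H ρ = (1 + (1+ε)*(1+b)*a * ρ ^ (-2 : ℝ)) / (1 + a * ρ ^ (-2 : ℝ)) ^ (1 + b)) :
    Filter.Tendsto H Filter.atTop (nhds 1)
    ∧ StrictAntiOn H (Set.Ioi (Real.sqrt (a*b*(1+ε)/ε)))
    ∧ ∀ ρ : ℝ, Real.sqrt (a*b*(1+ε)/ε) < ρ → 1 < H ρ := by
  have ha0 : 0 < a := by
    have : (2 : ℝ) ≤ n := by exact_mod_cast hn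
    rw [ha]; linarith
  have hH_eq : ∀ ρ, 0 < ρ → H ρ = profile b ε (a * ρ ^ (-2 : ℝ)) := fun ρ hρ => by
    rw [hH ρ hρ, profile, mul_assoc]
  have hs0 : Tendsto (fun ρ : ℝ => a * ρ ^ (-2 : ℝ)) atTop (𝓝 0) := by
    simpa using (tendsto_rpow_neg_atTop two_pos).const_mul a
  have hlim : Tendsto H atTop (𝓝 1) := by
    rw [← profile_zero (b := b) (ε := ε)]
    refine (continuousAt_profile_zero.tendsto.comp hs0).congr' ?_
    filter_upwards [eventually_gt_atTop 0] with ρ hρ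
    exact (hH_eq ρ hρ).symm
  have hρ₀ : a * b * (1 + ε) / ε = a / (ε / (b * (1 + ε))) := by field_simp
  have hmaps : ∀ ρ ∈ Ioi √(a * b * (1 + ε) / ε),
      a * ρ ^ (-2 : ℝ) ∈ Icc 0 (ε / (b * (1 + ε))) := fun ρ hρ => by
    have hρ0 : 0 < ρ := (sqrt_nonneg _).trans_lt hρ
    rw [mem_Ioi, hρ₀] at hρ
    exact ⟨by positivity, (mul_rpow_neg_two_lt_of_sqrt_div_lt (by positivity) hρ).le⟩
  have hanti : StrictAntiOn H (Ioi √(a * b * (1 + ε) / ε)) := by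
    intro x hx y hy hxy
    have hx0 : 0 < x := (sqrt_nonneg _).trans_lt hx
    rw [hH_eq x hx0, hH_eq y (hx0.trans hxy)]
    exact strictMonoOn_profile hb hε (hmaps y hy) (hmaps x hx) <|
      mul_lt_mul_of_pos_left (rpow_lt_rpow_of_neg hx0 hxy (by norm_num)) ha0
  exact ⟨hlim, hanti, fun ρ hρ => hanti.lt_of_tendsto_atTop hlim hρ⟩

theorem stmt5 (n : ℕ) (hn : 2 ≤ n) (a b ε : ℝ) (ha : a = 2 * ((n : ℝ) - 1))
    (hb : 0 < b) (hb1 : b < 1) (hε : 0 < ε)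
    (H : ℝ → ℝ)
    (hH : ∀ ρ : ℝ, 0 < ρ →
      H ρ = (1 + (1+ε)*(1+b)*a * ρ ^ (-2 : ℝ)) / (1 + a * ρ ^ (-2 : ℝ)) ^ (1 + b)) :
    Filter.Tendsto H Filter.atTop (nhds 1)
    ∧ StrictAntiOn H (Set.Ioi (Real.sqrt (a*b*(1+ε)/ε)))
    ∧ ∀ ρ : ℝ, Real.sqrt (a*b*(1+ε)/ε) < ρ → 1 < H ρ :=
  stmt5_general n hn a b ε ha hb hε H hH
end

section
/- Let b_* ∈ (1/2,1) and suppose v is a nonnegative smooth function on (0, r_0] × [0, t_0] satisfying (∂_t − F_r) v ≥ 0 there, and v(r, 0) > r^{2 b_*} for all r ∈ (0, r_0]. Then there exist r_1 > 0 and t_1 > 0 such that v(r,t) ≥ r^{2 b_*} on (0, r_1) × [0, t_1]. -/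
open Real Filter Set

section helpers
-- (helpers pasted later; assume available)
/-- Second derivative test at a local minimum. -/
lemma my_secondDeriv_nonneg (f : ℝ → ℝ) (p : ℝ)
    (hf : ∀ᶠ x in nhds p, DifferentiableAt ℝ f x)
    (hf' : DifferentiableAt ℝ (deriv f) p)
    (hmin : IsLocalMin f p) : 0 ≤ deriv (deriv f) p := by
  by_contra hc
  push_neg at hc
  have h0 : deriv f p = 0 := hmin.deriv_eq_zero
  have hslope : Tendsto (slope (deriv f) p) (nhdsWithin p {p}ᶜ) (nhds (deriv (deriv f) p)) :=
    hasDerivAt_iff_tendsto_slope.1 hf'.hasDerivAt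
  have hneg : ∀ᶠ x in nhdsWithin p (Set.Ioi p), deriv f x < 0 := by
    have h1 : ∀ᶠ x in nhdsWithin p (Set.Ioi p), slope (deriv f) p x < 0 := by
      have := (hslope.mono_left (nhdsWithin_mono p (fun x hx => ne_of_gt hx : Set.Ioi p ⊆ {p}ᶜ))).eventually_lt_const hc
      exact this
    filter_upwards [h1, self_mem_nhdsWithin] with x hx hxp
    rw [slope_def_field, h0, sub_zero] at hx
    have : x - p > 0 := sub_pos.2 hxp
    have := mul_neg_of_neg_of_pos hx this
    rw [div_mul_cancel₀] at this
    · exact this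
    · exact ne_of_gt (sub_pos.2 hxp)
  -- get an interval
  obtain ⟨b, hb, hball⟩ := mem_nhdsGT_iff_exists_Ioc_subset.1 hneg
  obtain ⟨ε, hε, hballd⟩ := Metric.eventually_nhds_iff.1 hf
  set c := min b (p + ε/2) with hcdef
  have hpc : p < c := lt_min hb (by linarith)
  have hdiff : ∀ x ∈ Set.Icc p c, DifferentiableAt ℝ f x := by
    intro x hx
    apply hballd
    rw [Real.dist_eq, abs_lt]
    constructor
    · linarith [hx.1]
    · have := hx.2
      have : x ≤ p + ε/2 := le_trans this (min_le_right _ _)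
      linarith
  have hanti : StrictAntiOn f (Set.Icc p c) := by
    apply strictAntiOn_of_deriv_neg (convex_Icc p c)
    · exact fun x hx => (hdiff x hx).continuousAt.continuousWithinAt
    · intro x hx
      rw [interior_Icc] at hx
      exact hball ⟨hx.1, le_trans hx.2.le (min_le_left _ _)⟩
  have : ∀ᶠ x in nhdsWithin p (Set.Ioi p), f p ≤ f x :=
    (hmin.filter_mono nhdsWithin_le_nhds)
  have h2 : ∀ᶠ x in nhdsWithin p (Set.Ioi p), x ∈ Set.Ioc p c := by
    exact mem_nhdsGT_iff_exists_Ioc_subset.2 ⟨c, hpc, fun x hx => hx⟩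
  obtain ⟨x, hx1, hx2⟩ := (this.and h2).exists
  have := hanti (Set.left_mem_Icc.2 hpc.le) ⟨hx2.1.le, hx2.2⟩ hx2.1
  linarith

/-- Derivative nonpositive at min over [0,t₁] attained at s > 0. -/
lemma my_deriv_nonpos_of_isMinOn (g : ℝ → ℝ) (s t₁ : ℝ) (hs : 0 < s) (hst : s ≤ t₁)
    (hg : DifferentiableAt ℝ g s) (hmin : ∀ t ∈ Set.Icc (0:ℝ) t₁, g s ≤ g t) :
    deriv g s ≤ 0 := by
  have hslope : Tendsto (slope g s) (nhdsWithin s {s}ᶜ) (nhds (deriv g s)) :=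
    hasDerivAt_iff_tendsto_slope.1 hg.hasDerivAt
  have hle : Tendsto (slope g s) (nhdsWithin s (Set.Iio s)) (nhds (deriv g s)) :=
    hslope.mono_left (nhdsWithin_mono s (fun x hx => ne_of_lt hx))
  refine le_of_tendsto hle ?_
  have hev : ∀ᶠ x in nhdsWithin s (Set.Iio s), x ∈ Set.Ioi (0:ℝ) :=
    eventually_nhdsWithin_of_eventually_nhds (eventually_mem_nhds_iff.mpr (Ioi_mem_nhds hs) |>.mono (fun x hx => mem_of_mem_nhds hx))
  filter_upwards [hev, self_mem_nhdsWithin] with x hx0 hxs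
  rw [slope_def_field]
  apply div_nonpos_of_nonneg_of_nonpos
  · have h1 := hmin x ⟨le_of_lt (Set.mem_Ioi.1 hx0), le_trans (le_of_lt (Set.mem_Iio.1 hxs)) hst⟩
    linarith
  · have := Set.mem_Iio.1 hxs
    linarith
end helpers

set_option maxHeartbeats 1000000 in
theorem stmt8 (n : ℕ) (hn : 2 ≤ n) (bs r₀ t₀ : ℝ) (hbs : 1/2 < bs) (hbs1 : bs < 1)
    (hr₀ : 0 < r₀) (ht₀ : 0 < t₀) (v : ℝ → ℝ → ℝ)
    (hsmooth : ContDiffOn ℝ (⊤ : ℕ∞) (Function.uncurry v) (Set.Ioc 0 r₀ ×ˢ Set.Icc 0 t₀))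
    (hnonneg : ∀ r ∈ Set.Ioc (0:ℝ) r₀, ∀ t ∈ Set.Icc (0:ℝ) t₀, 0 ≤ v r t)
    (hsuper : ∀ r ∈ Set.Ioc (0:ℝ) r₀, ∀ t ∈ Set.Icc (0:ℝ) t₀,
      0 ≤ deriv (fun t' => v r t') t
        - (v r t * deriv (deriv (fun r' => v r' t)) r
           - (1/2) * (deriv (fun r' => v r' t) r)^2
           + (((n:ℝ) - 1 - v r t) / r) * deriv (fun r' => v r' t) r
           + (2*((n:ℝ) - 1) / r^2) * v r t * (1 - v r t)))
    (hinit : ∀ r ∈ Set.Ioc (0:ℝ) r₀, r ^ (2*bs) < v r 0) :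
    ∃ r₁ > (0:ℝ), ∃ t₁ > (0:ℝ), ∀ r ∈ Set.Ioo (0:ℝ) r₁, ∀ t ∈ Set.Icc (0:ℝ) t₁,
      r ^ (2*bs) ≤ v r t := by
  set a := 2 * bs with ha_def
  have ha1 : 1 < a := by simp only [ha_def]; linarith
  have ha2 : a < 2 := by simp only [ha_def]; linarith
  have ha0 : 0 < a := by linarith
  set S := Set.Ioc (0:ℝ) r₀ ×ˢ Set.Icc (0:ℝ) t₀ with hS_def
  -- choose r₁
  set c : ℝ := (4:ℝ)⁻¹ ^ a⁻¹ with hc_def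
  have hc_pos : 0 < c := Real.rpow_pos_of_pos (by norm_num) _
  have hc_pow : c ^ a = 4⁻¹ := Real.rpow_inv_rpow (by norm_num) (ne_of_gt ha0)
  set r₁ := min r₀ c with hr₁_def
  have hr₁_pos : 0 < r₁ := lt_min hr₀ hc_pos
  have hr₁_le : r₁ ≤ r₀ := min_le_left _ _
  have hr₁_pow : r₁ ^ a ≤ 4⁻¹ := by
    rw [← hc_pow]
    exact Real.rpow_le_rpow hr₁_pos.le (min_le_right _ _) ha0.le
  -- choose t₁ by continuity along r = r₁
  have hr₁_mem : r₁ ∈ Set.Ioc (0:ℝ) r₀ := ⟨hr₁_pos, hr₁_le⟩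
  have hcont_line : ContinuousOn (fun t => v r₁ t) (Set.Icc 0 t₀) := by
    have : ContinuousOn (Function.uncurry v) S := hsmooth.continuousOn
    exact this.comp (Continuous.continuousOn (by continuity))
      (fun t ht => Set.mk_mem_prod hr₁_mem ht)
  have hv0 : r₁ ^ a < v r₁ 0 := hinit r₁ hr₁_mem
  obtain ⟨u, hu_pos, hu⟩ : ∃ u > 0, ∀ t ∈ Set.Icc (0:ℝ) u, r₁ ^ a < v r₁ t := by
    have hcw : ContinuousWithinAt (fun t => v r₁ t) (Set.Icc 0 t₀) 0 :=
      hcont_line 0 (Set.left_mem_Icc.2 ht₀.le)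
    have hev : ∀ᶠ t in nhdsWithin (0:ℝ) (Set.Icc 0 t₀), r₁ ^ a < v r₁ t :=
      hcw.eventually_const_lt hv0
    rw [nhdsWithin_Icc_eq_nhdsGE ht₀] at hev
    obtain ⟨u, hu1, hu2⟩ := mem_nhdsGE_iff_exists_Icc_subset.1 hev
    exact ⟨u, hu1, fun t ht => hu2 ht⟩
  set t₁ := min u (t₀ / 2) with ht₁_def
  have ht₁_pos : 0 < t₁ := lt_min hu_pos (by linarith)
  have ht₁_lt : t₁ < t₀ := lt_of_le_of_lt (min_le_right _ _) (by linarith)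
  refine ⟨r₁, hr₁_pos, t₁, ht₁_pos, ?_⟩
  intro r hr t ht
  by_contra hlt
  push_neg at hlt
  -- basic facts about (r, t)
  have hr_mem : r ∈ Set.Ioc (0:ℝ) r₀ := ⟨hr.1, le_trans hr.2.le hr₁_le⟩
  have ht_mem : t ∈ Set.Icc (0:ℝ) t₀ := ⟨ht.1, le_trans ht.2 ht₁_lt.le⟩
  set ε := r ^ a - v r t with hε_def
  have hε_pos : 0 < ε := by simp only [hε_def]; linarith
  have hε_le : ε ≤ r ^ a := by
    have := hnonneg r hr_mem t ht_mem
    simp only [hε_def]; linarith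
  set ρ : ℝ := (ε / 2) ^ a⁻¹ with hρ_def
  have hρ_pos : 0 < ρ := Real.rpow_pos_of_pos (by linarith) _
  have hρ_pow : ρ ^ a = ε / 2 := Real.rpow_inv_rpow (by linarith) (ne_of_gt ha0)
  have hρ_lt : ρ < r := by
    by_contra hge
    push_neg at hge
    have := Real.rpow_le_rpow hr.1.le hge ha0.le
    rw [hρ_pow] at this
    linarith
  -- the compact set and the min
  set K := Set.Icc ρ r₁ ×ˢ Set.Icc (0:ℝ) t₁ with hK_def
  have hK_sub : K ⊆ S := by
    rintro ⟨x, y⟩ ⟨hx, hy⟩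
    exact ⟨⟨lt_of_lt_of_le hρ_pos hx.1, le_trans hx.2 hr₁_le⟩,
      ⟨hy.1, le_trans hy.2 ht₁_lt.le⟩⟩
  set w : ℝ × ℝ → ℝ := fun q => v q.1 q.2 - q.1 ^ a with hw_def
  have hw_cont : ContinuousOn w K := by
    apply ContinuousOn.sub (hsmooth.continuousOn.mono hK_sub)
    exact (continuous_fst.rpow_const (fun x => Or.inr ha0.le)).continuousOn
  have hrtK : (r, t) ∈ K := ⟨⟨hρ_lt.le, hr.2.le⟩, ht⟩
  obtain ⟨⟨p, s⟩, hpsK, hps_min⟩ :=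
    (isCompact_Icc.prod isCompact_Icc).exists_isMinOn ⟨(r, t), hrtK⟩ hw_cont
  have hmin : ∀ q ∈ K, w (p, s) ≤ w q := hps_min
  have hwps : w (p, s) ≤ -ε := by
    have := hmin (r, t) hrtK
    simp only [hw_def, hε_def] at this ⊢
    linarith
  obtain ⟨⟨hρp, hpr₁⟩, hs0, hst₁⟩ : (ρ ≤ p ∧ p ≤ r₁) ∧ 0 ≤ s ∧ s ≤ t₁ :=
    ⟨hpsK.1, hpsK.2.1, hpsK.2.2⟩
  have hp_pos : 0 < p := lt_of_lt_of_le hρ_pos hρp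
  have hp_mem : p ∈ Set.Ioc (0:ℝ) r₀ := ⟨hp_pos, le_trans hpr₁ hr₁_le⟩
  have hs_mem : s ∈ Set.Icc (0:ℝ) t₀ := ⟨hs0, le_trans hst₁ ht₁_lt.le⟩
  have hv_ps : 0 ≤ v p s := hnonneg p hp_mem s hs_mem
  have hP_ge : ε ≤ p ^ a := by
    simp only [hw_def] at hwps; linarith
  have hρp_lt : ρ < p := by
    by_contra hge
    push_neg at hge
    have h1 := Real.rpow_le_rpow hp_pos.le hge ha0.le
    rw [hρ_pow] at h1
    linarith
  have hpr₁_lt : p < r₁ := by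
    rcases lt_or_eq_of_le hpr₁ with h | h
    · exact h
    · exfalso
      have hsline := hu s ⟨hs0, le_trans hst₁ (min_le_left _ _)⟩
      simp only [hw_def, h] at hwps
      linarith
  have hs_pos : 0 < s := by
    rcases lt_or_eq_of_le hs0 with h | h
    · exact h
    · exfalso
      have := hinit p hp_mem
      simp only [hw_def, ← h] at hwps
      linarith
  -- smoothness at the interior point (p, s)
  have hS_nhds : S ∈ nhds (p, s) := by
    have hopen : IsOpen (Set.Ioo (0:ℝ) r₀ ×ˢ Set.Ioo (0:ℝ) t₀) :=
      isOpen_Ioo.prod isOpen_Ioo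
    have hsub : Set.Ioo (0:ℝ) r₀ ×ˢ Set.Ioo (0:ℝ) t₀ ⊆ S := by
      rintro ⟨x, y⟩ ⟨hx, hy⟩
      exact ⟨⟨hx.1, hx.2.le⟩, ⟨hy.1.le, hy.2.le⟩⟩
    exact Filter.mem_of_superset
      (hopen.mem_nhds ⟨⟨hp_pos, lt_of_lt_of_le hpr₁_lt hr₁_le⟩,
        ⟨hs_pos, lt_of_le_of_lt hst₁ ht₁_lt⟩⟩) hsub
  have hCD : ContDiffAt ℝ (⊤ : ℕ∞) (Function.uncurry v) (p, s) :=
    hsmooth.contDiffAt hS_nhds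
  -- the radial slice
  have hf1 : ContDiffAt ℝ (⊤ : ℕ∞) (fun r' => v r' s) p := by
    have hg : ContDiffAt ℝ (⊤ : ℕ∞) (fun r' : ℝ => (r', s)) p :=
      contDiffAt_id.prodMk contDiffAt_const
    exact hCD.comp p hg
  have hf2 : ContDiffAt ℝ (⊤ : ℕ∞) (fun t' => v p t') s := by
    have hg : ContDiffAt ℝ (⊤ : ℕ∞) (fun t' : ℝ => (p, t')) s :=
      contDiffAt_const.prodMk contDiffAt_id
    exact hCD.comp s hg
  -- a C² neighborhood for the radial slice
  obtain ⟨U, hU_mem, hU_cd⟩ : ∃ U ∈ nhds p, ContDiffOn ℝ 2 (fun r' => v r' s) U :=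
    hf1.contDiffOn (WithTop.coe_le_coe.2 le_top) (by norm_num)
  have hpUo : p ∈ interior U := mem_interior_iff_mem_nhds.2 hU_mem
  have hcdUo : ContDiffOn ℝ 2 (fun r' => v r' s) (interior U) := hU_cd.mono interior_subset
  have hdiff1 : ∀ x ∈ interior U, DifferentiableAt ℝ (fun r' => v r' s) x := fun x hx =>
    ((hcdUo.differentiableOn (by norm_num)) x hx).differentiableAt
      (isOpen_interior.mem_nhds hx)
  have hder_cd : ContDiffOn ℝ 1 (deriv (fun r' => v r' s)) (interior U) :=
    hcdUo.deriv_of_isOpen isOpen_interior (by norm_num)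
  have hder_diff : DifferentiableAt ℝ (deriv (fun r' => v r' s)) p :=
    ((hder_cd.differentiableOn one_ne_zero) p hpUo).differentiableAt
      (isOpen_interior.mem_nhds hpUo)
  -- local minimum of h1 = v · s - ·^a at p
  set h1 : ℝ → ℝ := fun r' => v r' s - r' ^ a with hh1_def
  have hloc : IsLocalMin h1 p := by
    filter_upwards [Icc_mem_nhds hρp_lt hpr₁_lt] with x hx
    exact hmin (x, s) ⟨hx, ⟨hs0, hst₁⟩⟩
  have hrpow_d : HasDerivAt (fun x : ℝ => x ^ a) (a * p ^ (a - 1)) p :=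
    Real.hasDerivAt_rpow_const (Or.inl hp_pos.ne')
  have hdf1p : DifferentiableAt ℝ (fun r' => v r' s) p := hdiff1 p hpUo
  have hE1 : deriv (fun r' => v r' s) p = a * p ^ (a - 1) := by
    have h0 : deriv h1 p = 0 := hloc.deriv_eq_zero
    have heq : deriv h1 p = deriv (fun r' => v r' s) p - a * p ^ (a - 1) := by
      rw [hh1_def]
      rw [deriv_fun_sub hdf1p hrpow_d.differentiableAt, hrpow_d.deriv]
    linarith
  -- the second derivative bound
  have hev_pos : ∀ᶠ x in nhds p, (0:ℝ) < x := eventually_gt_nhds hp_pos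
  have hev_eq : ∀ᶠ x in nhds p,
      deriv h1 x = deriv (fun r' => v r' s) x - a * x ^ (a - 1) := by
    filter_upwards [isOpen_interior.mem_nhds hpUo, hev_pos] with x hx hx0
    rw [hh1_def]
    rw [deriv_fun_sub (hdiff1 x hx)
      (Real.hasDerivAt_rpow_const (p := a) (Or.inl hx0.ne')).differentiableAt,
      (Real.hasDerivAt_rpow_const (p := a) (Or.inl hx0.ne')).deriv]
  have hdiff_mul : DifferentiableAt ℝ (fun x : ℝ => a * x ^ (a - 1)) p :=
    ((Real.hasDerivAt_rpow_const (p := a - 1) (Or.inl hp_pos.ne')).differentiableAt).const_mul a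
  have hRHS_diff : DifferentiableAt ℝ
      (fun x => deriv (fun r' => v r' s) x - a * x ^ (a - 1)) p :=
    hder_diff.sub hdiff_mul
  have hderh1_diff : DifferentiableAt ℝ (deriv h1) p :=
    hRHS_diff.congr_of_eventuallyEq hev_eq
  have hsecond : 0 ≤ deriv (deriv h1) p := by
    apply my_secondDeriv_nonneg h1 p _ hderh1_diff hloc
    filter_upwards [isOpen_interior.mem_nhds hpUo, hev_pos] with x hx hx0
    exact (hdiff1 x hx).sub
      (Real.hasDerivAt_rpow_const (p := a) (Or.inl hx0.ne')).differentiableAt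
  have hE2 : a * (a - 1) * p ^ (a - 2) ≤ deriv (deriv (fun r' => v r' s)) p := by
    have heq1 : deriv (deriv h1) p =
        deriv (fun x => deriv (fun r' => v r' s) x - a * x ^ (a - 1)) p :=
      Filter.EventuallyEq.deriv_eq hev_eq
    have heq2 : deriv (fun x => deriv (fun r' => v r' s) x - a * x ^ (a - 1)) p =
        deriv (deriv (fun r' => v r' s)) p - a * ((a - 1) * p ^ (a - 1 - 1)) := by
      rw [deriv_fun_sub hder_diff hdiff_mul]
      congr 1
      rw [deriv_const_mul _ (Real.hasDerivAt_rpow_const (p := a - 1)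
        (Or.inl hp_pos.ne')).differentiableAt,
        (Real.hasDerivAt_rpow_const (p := a - 1) (Or.inl hp_pos.ne')).deriv]
    have hexp : a - 1 - 1 = a - 2 := by ring
    rw [heq1, heq2, hexp] at hsecond
    linarith
  -- the time derivative bound
  have hE3 : deriv (fun t' => v p t') s ≤ 0 := by
    apply my_deriv_nonpos_of_isMinOn _ s t₁ hs_pos hst₁
      (hf2.differentiableAt (by simp))
    intro t' ht'
    have := hmin (p, t') ⟨⟨hρp, hpr₁⟩, ht'⟩
    simp only [hw_def] at this
    linarith
  -- final contradiction using the supersolution inequality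
  have hsup := hsuper p hp_mem s hs_mem
  set V := v p s with hV_def
  set D2 := deriv (deriv (fun r' => v r' s)) p with hD2_def
  set Vt := deriv (fun t' => v p t') s with hVt_def
  set Q := p ^ a with hQ_def
  have hQ_pos : 0 < Q := Real.rpow_pos_of_pos hp_pos a
  have hQ_le : Q ≤ 4⁻¹ := by
    refine le_trans ?_ hr₁_pow
    exact Real.rpow_le_rpow hp_pos.le hpr₁_lt.le ha0.le
  have hV_ub : V ≤ Q - ε := by
    simp only [hw_def] at hwps
    linarith
  have hp2 : (0:ℝ) < p ^ 2 := by positivity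
  have e1 : p ^ (a - 1) = Q / p := by
    rw [hQ_def, Real.rpow_sub hp_pos, Real.rpow_one]
  have e2 : p ^ (a - 2) = Q / p ^ 2 := by
    rw [hQ_def, Real.rpow_sub hp_pos,
      show ((2:ℝ) = ((2:ℕ):ℝ)) by norm_num, Real.rpow_natCast]
  rw [hE1, e1] at hsup
  rw [e2] at hE2
  have hD2_nonneg : 0 ≤ D2 := by
    refine le_trans ?_ hE2
    apply mul_nonneg (mul_nonneg ha0.le (by linarith))
    positivity
  have hT1 : 0 ≤ V * D2 := mul_nonneg hv_ps hD2_nonneg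
  have hn1 : (1:ℝ) ≤ (n:ℝ) - 1 := by
    have : (2:ℝ) ≤ (n:ℝ) := by exact_mod_cast hn
    linarith
  have hT4 : 0 ≤ 2 * ((n:ℝ) - 1) / p ^ 2 * V * (1 - V) := by
    apply mul_nonneg (mul_nonneg (by positivity) hv_ps)
    linarith
  have hsq : (a * (Q / p)) ^ 2 = a ^ 2 * Q ^ 2 / p ^ 2 := by
    field_simp
  have hBeq : ((n:ℝ) - 1 - V) / p * (a * (Q / p)) = ((n:ℝ) - 1 - V) * a * Q / p ^ 2 := by
    field_simp
  rw [hsq, hBeq] at hsup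
  have h6 : ((n:ℝ) - 1 - V) * a * Q / p ^ 2 ≤ 1 / 2 * (a ^ 2 * Q ^ 2 / p ^ 2) := by
    linarith
  have h7 : ((n:ℝ) - 1 - V) * a * Q ≤ 1 / 2 * (a ^ 2 * Q ^ 2) := by
    have hm := mul_le_mul_of_nonneg_right h6 hp2.le
    rw [div_mul_cancel₀ _ hp2.ne'] at hm
    calc ((n:ℝ) - 1 - V) * a * Q ≤ 1 / 2 * (a ^ 2 * Q ^ 2 / p ^ 2) * p ^ 2 := hm
      _ = 1 / 2 * (a ^ 2 * Q ^ 2) := by field_simp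
  have haQ : 0 < a * Q := mul_pos ha0 hQ_pos
  have haQ2 : a * Q ≤ 1 / 2 := by
    have h := mul_le_mul_of_nonneg_right ha2.le hQ_pos.le
    linarith only [h, hQ_le]
  have hnV : 3 / 4 ≤ (n:ℝ) - 1 - V := by
    linarith only [hn1, hV_ub, hQ_le, hε_pos]
  have h8 := mul_le_mul_of_nonneg_right hnV haQ.le
  have hsqle : a * Q * (a * Q) ≤ a * Q * (1 / 2) :=
    mul_le_mul_of_nonneg_left haQ2 haQ.le
  linarith only [h7, h8, hsqle, haQ]
end
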